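/- State-wise CFR regret bound: let (π^t)_{t=1}^T be a sequence of stationary policies and (r^t)_{t=1}^T a sequence of reward functions bounded by r̄ such that Σ_{t=1}^T ρ_s(a, π^t; r^t) ≤ C^T for every state s and action a. Then for every state s and every stationary policy π, Σ_{t=1}^T ( v_s(π; r^t) - v_s(π^t; r^t) ) ≤ C^T / (1-γ). -/

import Mathlib

open scoped BigOperators
open MeasureTheory

/-- A finite discounted Markov decision process `(S, A, p, d_∅, γ)`. -/
structure MDP (S A : Type) [Fintype S] [Fintype A] [DecidableEq S] where
  /-- transition probabilities `p(s' | s, a)` -/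
  p : S → A → S → ℝ
  p_nonneg : ∀ s a s', 0 ≤ p s a s'
  p_sum_one : ∀ s a, ∑ s', p s a s' = 1
  /-- initial state distribution `d_∅` -/
  d0 : S → ℝ
  d0_nonneg : ∀ s, 0 ≤ d0 s
  d0_sum_one : ∑ s, d0 s = 1
  /-- discount factor `γ ∈ [0, 1)` -/
  γ : ℝ
  γ_nonneg : 0 ≤ γ
  γ_lt_one : γ < 1

/-- A stationary policy: a probability distribution `π(·|s)` over actions for each state. -/
structure Policy (S A : Type) [Fintype A] where
  prob : S → A → ℝ
  nonneg : ∀ s a, 0 ≤ prob s a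
  sum_one : ∀ s, ∑ a, prob s a = 1

variable {S A : Type} [Fintype S] [Fintype A] [DecidableEq S]

/-- Distribution of the state `S_i` at time `i` of the Markov chain induced by policy `π`
started at `S_0 = s`. -/
def MDP.stepDist (M : MDP S A) (π : Policy S A) (s : S) : ℕ → S → ℝ
  | 0 => fun s' => if s' = s then 1 else 0
  | i + 1 => fun s' => ∑ s₀ : S, ∑ a : A, M.stepDist π s i s₀ * π.prob s₀ a * M.p s₀ a s'

/-- Expected reward `E[r(S_i, A_{i+1}, S_{i+1})]` at step `i` of the chain induced by `π`
started at `S_0 = s`. -/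
def MDP.expReward (M : MDP S A) (π : Policy S A) (r : S → A → S → ℝ) (s : S) (i : ℕ) : ℝ :=
  ∑ s₀ : S, ∑ a : A, ∑ s' : S, M.stepDist π s i s₀ * π.prob s₀ a * M.p s₀ a s' * r s₀ a s'

/-- The normalized `γ`-discounted expected return
`v_s(π; r) = (1-γ) E[Σ_{i=0}^∞ γ^i r(S_i, A_{i+1}, S_{i+1})]`. -/
noncomputable def MDP.v (M : MDP S A) (π : Policy S A) (r : S → A → S → ℝ) (s : S) : ℝ :=
  (1 - M.γ) * ∑' i : ℕ, M.γ ^ i * M.expReward π r s i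

/-- Expected reward at step `i` of the chain started at `S_0 = s`, conditioned on `A_1 = a`,
following `π` thereafter. -/
def MDP.expRewardQ (M : MDP S A) (π : Policy S A) (r : S → A → S → ℝ) (s : S) (a : A) :
    ℕ → ℝ
  | 0 => ∑ s' : S, M.p s a s' * r s a s'
  | i + 1 => ∑ s' : S, M.p s a s' * M.expReward π r s' i

/-- The normalized `γ`-discounted expected return `q_s(a, π; r)` for taking action `a` in
state `s` and following `π` thereafter. -/
noncomputable def MDP.q (M : MDP S A) (π : Policy S A) (r : S → A → S → ℝ) (s : S) (a : A) :
    ℝ :=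
  (1 - M.γ) * ∑' i : ℕ, M.γ ^ i * M.expRewardQ π r s a i

/-- The (normalized) advantage `ρ_s(a, π; r) = q_s(a, π; r) - v_s(π; r)`. -/
noncomputable def MDP.adv (M : MDP S A) (π : Policy S A) (r : S → A → S → ℝ) (s : S)
    (a : A) : ℝ :=
  M.q π r s a - M.v π r s

/-- The normalized `γ`-discounted expected return from the initial state distribution,
`v_∅(π; r) = E_{S_0 ~ d_∅}[v_{S_0}(π; r)]`. -/
noncomputable def MDP.vInit (M : MDP S A) (π : Policy S A) (r : S → A → S → ℝ) : ℝ :=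
  ∑ s : S, M.d0 s * M.v π r s

/-- The `γ`-discounted future state distribution
`d_s(s'; π) = (1-γ) E[Σ_{i=0}^∞ γ^i 1[S_i = s']]` induced by `π` from `s`. -/
noncomputable def MDP.futureDist (M : MDP S A) (π : Policy S A) (s s' : S) : ℝ :=
  (1 - M.γ) * ∑' i : ℕ, M.γ ^ i * M.stepDist π s i s'

/-! Telescoping the one-step Bellman equation `q_s(a, π') = E[(1-γ) r + γ v_{S_1}(π')]` along the
chain of `π` gives the performance difference lemma
`v_s(π) - v_s(π') = Σ_i γ^i E_π[Σ_a π(a|S_i) ρ_{S_i}(a, π')]`.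
Summed over `t`, each expectation is an average of the state-local cumulative advantages, so it
is at most `C`, and `Σ_i γ^i C = C / (1 - γ)`. -/

lemma sum_mul_le_of_sum_eq_one {ι : Type*} [Fintype ι] {w f : ι → ℝ} {C : ℝ}
    (hw : ∀ i, 0 ≤ w i) (hw1 : ∑ i, w i = 1) (hf : ∀ i, f i ≤ C) : ∑ i, w i * f i ≤ C :=
  calc ∑ i, w i * f i ≤ ∑ i, w i * C :=
        Finset.sum_le_sum fun i _ => mul_le_mul_of_nonneg_left (hf i) (hw i)
    _ = C := by rw [← Finset.sum_mul, hw1, one_mul]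

lemma abs_sum_mul_le_of_sum_eq_one {ι : Type*} [Fintype ι] {w f : ι → ℝ} {C : ℝ}
    (hw : ∀ i, 0 ≤ w i) (hw1 : ∑ i, w i = 1) (hf : ∀ i, |f i| ≤ C) : |∑ i, w i * f i| ≤ C := by
  rw [abs_le, neg_le, ← Finset.sum_neg_distrib]
  simp only [← mul_neg]
  exact ⟨sum_mul_le_of_sum_eq_one hw hw1 fun i => neg_le.mp (abs_le.mp (hf i)).1,
    sum_mul_le_of_sum_eq_one hw hw1 fun i => (abs_le.mp (hf i)).2⟩

lemma summable_pow_mul_of_abs_le {γ c : ℝ} (hγ₀ : 0 ≤ γ) (hγ₁ : γ < 1) {f : ℕ → ℝ}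
    (hf : ∀ i, |f i| ≤ c) : Summable fun i => γ ^ i * f i := by
  refine .of_norm_bounded ((summable_geometric_of_lt_one hγ₀ hγ₁).mul_right c) fun i => ?_
  rw [Real.norm_eq_abs, abs_mul, abs_pow, abs_of_nonneg hγ₀]
  exact mul_le_mul_of_nonneg_left (hf i) (pow_nonneg hγ₀ i)

namespace MDP

variable (M : MDP S A) (π π' : Policy S A) (r : S → A → S → ℝ) (s : S)

/-- `M.expectAt π s i V` is `E[V(S_i)]` for the chain induced by `π` from `S_0 = s`. -/
def expectAt (i : ℕ) (V : S → ℝ) : ℝ :=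
  ∑ s₀, M.stepDist π s i s₀ * V s₀

lemma expectAt_zero (V : S → ℝ) : M.expectAt π s 0 V = V s := by
  simp [expectAt, stepDist]

lemma expectAt_succ (i : ℕ) (V : S → ℝ) :
    M.expectAt π s (i + 1) V =
      M.expectAt π s i fun s₀ => ∑ a, π.prob s₀ a * ∑ s', M.p s₀ a s' * V s' := by
  simp only [expectAt, stepDist, Finset.sum_mul, Finset.mul_sum]
  rw [Finset.sum_comm]
  refine Finset.sum_congr rfl fun s₀ _ => ?_
  rw [Finset.sum_comm]
  refine Finset.sum_congr rfl fun a _ => Finset.sum_congr rfl fun s' _ => ?_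
  ring

lemma stepDist_nonneg : ∀ i s', 0 ≤ M.stepDist π s i s'
  | 0, s' => by simp only [stepDist]; split <;> norm_num
  | i + 1, s' => Finset.sum_nonneg fun s₀ _ => Finset.sum_nonneg fun a _ =>
      mul_nonneg (mul_nonneg (stepDist_nonneg i s₀) (π.nonneg s₀ a)) (M.p_nonneg s₀ a s')

lemma sum_stepDist (i : ℕ) : ∑ s', M.stepDist π s i s' = 1 := by
  have h : ∀ i, M.expectAt π s i (fun _ => 1) = 1 := by
    intro i
    induction i with
    | zero => exact M.expectAt_zero π s _
    | succ i ih => simpa [expectAt_succ, M.p_sum_one, π.sum_one] using ih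
  simpa [expectAt] using h i

lemma sum_expectAt {ι : Type*} (u : Finset ι) (V : ι → S → ℝ) (i : ℕ) :
    ∑ t ∈ u, M.expectAt π s i (V t) = M.expectAt π s i fun s₀ => ∑ t ∈ u, V t s₀ := by
  simp only [expectAt, Finset.mul_sum]
  exact Finset.sum_comm

lemma expectAt_le {V : S → ℝ} {C : ℝ} (hV : ∀ s', V s' ≤ C) (i : ℕ) :
    M.expectAt π s i V ≤ C :=
  sum_mul_le_of_sum_eq_one (M.stepDist_nonneg π s i) (M.sum_stepDist π s i) hV

lemma summable_expectAt (V : S → ℝ) : Summable fun i => M.γ ^ i * M.expectAt π s i V := by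
  obtain ⟨c, hc⟩ := Finite.exists_le fun s' => |V s'|
  exact summable_pow_mul_of_abs_le M.γ_nonneg M.γ_lt_one fun i =>
    abs_sum_mul_le_of_sum_eq_one (M.stepDist_nonneg π s i) (M.sum_stepDist π s i) hc

lemma expReward_eq_expectAt (i : ℕ) :
    M.expReward π r s i =
      M.expectAt π s i fun s₀ => ∑ a, π.prob s₀ a * ∑ s', M.p s₀ a s' * r s₀ a s' := by
  simp only [expReward, expectAt, Finset.mul_sum]
  refine Finset.sum_congr rfl fun s₀ _ => Finset.sum_congr rfl fun a _ =>
    Finset.sum_congr rfl fun s' _ => ?_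
  ring

lemma summable_expReward : Summable fun i => M.γ ^ i * M.expReward π r s i := by
  simpa only [expReward_eq_expectAt] using M.summable_expectAt π s _

lemma q_eq_one_step (a : A) :
    M.q π r s a = ∑ s', M.p s a s' * ((1 - M.γ) * r s a s' + M.γ * M.v π r s') := by
  have hv : ∀ s', HasSum (fun i => M.γ ^ i * M.expReward π r s' i)
      (∑' i, M.γ ^ i * M.expReward π r s' i) := fun s' => (M.summable_expReward π r s').hasSum
  have htail : HasSum (fun i => M.γ ^ (i + 1) * M.expRewardQ π r s a (i + 1))
      (∑ s', M.γ * (M.p s a s' * ∑' i, M.γ ^ i * M.expReward π r s' i)) := by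
    have hterm : ∀ i, M.γ ^ (i + 1) * M.expRewardQ π r s a (i + 1) =
        ∑ s', M.γ * (M.p s a s' * (M.γ ^ i * M.expReward π r s' i)) := by
      intro i
      rw [expRewardQ, Finset.mul_sum]
      exact Finset.sum_congr rfl fun s' _ => by ring
    simp only [hterm]
    exact hasSum_sum fun s' _ => ((hv s').mul_left (M.p s a s')).mul_left M.γ
  rw [q, (htail.zero_add (f := fun i => M.γ ^ i * M.expRewardQ π r s a i)).tsum_eq]
  simp only [expRewardQ, v, pow_zero, one_mul, Finset.mul_sum, ← Finset.sum_add_distrib]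
  exact Finset.sum_congr rfl fun s' _ => by ring

lemma sum_prob_mul_adv (s₀ : S) :
    ∑ a, π.prob s₀ a * M.adv π' r s₀ a =
      (1 - M.γ) * ∑ a, π.prob s₀ a * ∑ s', M.p s₀ a s' * r s₀ a s'
        + M.γ * ∑ a, π.prob s₀ a * ∑ s', M.p s₀ a s' * M.v π' r s' - M.v π' r s₀ := by
  simp only [adv, q_eq_one_step, mul_sub, Finset.sum_sub_distrib, ← Finset.sum_mul, π.sum_one,
    one_mul, mul_add, Finset.sum_add_distrib, Finset.mul_sum]
  congr 2 <;> exact Finset.sum_congr rfl fun a _ => Finset.sum_congr rfl fun s' _ => by ring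

lemma expectAt_adv (i : ℕ) :
    M.expectAt π s i (fun s₀ => ∑ a, π.prob s₀ a * M.adv π' r s₀ a) =
      (1 - M.γ) * M.expReward π r s i + M.γ * M.expectAt π s (i + 1) (M.v π' r)
        - M.expectAt π s i (M.v π' r) := by
  rw [expReward_eq_expectAt, expectAt_succ]
  simp only [expectAt, sum_prob_mul_adv, mul_sub, mul_add, Finset.sum_sub_distrib,
    Finset.sum_add_distrib]
  rw [Finset.mul_sum, Finset.mul_sum]
  congr 2 <;> exact Finset.sum_congr rfl fun s₀ _ => by ring

theorem hasSum_performance_difference :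
    HasSum (fun i => M.γ ^ i * M.expectAt π s i fun s₀ => ∑ a, π.prob s₀ a * M.adv π' r s₀ a)
      (M.v π r s - M.v π' r s) := by
  set F : ℕ → ℝ := fun i => M.γ ^ i * M.expectAt π s i (M.v π' r)
  have hstep : ∀ i, M.γ ^ i * M.expectAt π s i (fun s₀ => ∑ a, π.prob s₀ a * M.adv π' r s₀ a) =
      (1 - M.γ) * (M.γ ^ i * M.expReward π r s i) + (F (i + 1) - F i) := by
    intro i
    rw [expectAt_adv]
    ring
  have hpartial : ∀ n, ∑ i ∈ Finset.range n,
      M.γ ^ i * M.expectAt π s i (fun s₀ => ∑ a, π.prob s₀ a * M.adv π' r s₀ a) =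
      (1 - M.γ) * ∑ i ∈ Finset.range n, M.γ ^ i * M.expReward π r s i + (F n - F 0) := by
    intro n
    rw [Finset.sum_congr rfl fun i _ => hstep i, Finset.sum_add_distrib, Finset.sum_range_sub,
      Finset.mul_sum]
  have hF0 : F 0 = M.v π' r s := by simp [F, expectAt_zero]
  rw [(M.summable_expectAt π s _).hasSum_iff_tendsto_nat, funext hpartial, ← hF0]
  have hlim := ((M.summable_expReward π r s).hasSum.tendsto_sum_nat.const_mul (1 - M.γ)).add
    ((M.summable_expectAt π s (M.v π' r)).tendsto_atTop_zero.sub_const (F 0))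
  rwa [zero_sub, ← sub_eq_add_neg] at hlim

end MDP

theorem cfr_statewise_regret_bound_general
    (M : MDP S A) (T : ℕ) (πs : Fin T → Policy S A)
    (rs : Fin T → S → A → S → ℝ)
    (C : ℝ) (hC : ∀ (s : S) (a : A), ∑ t : Fin T, M.adv (πs t) (rs t) s a ≤ C)
    (s : S) (π : Policy S A) :
    ∑ t : Fin T, (M.v π (rs t) s - M.v (πs t) (rs t) s) ≤ C / (1 - M.γ) := by
  have hregret := hasSum_sum fun t (_ : t ∈ Finset.univ) =>
    M.hasSum_performance_difference π (πs t) (rs t) s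
  have hgeom : HasSum (fun i => M.γ ^ i * C) (C / (1 - M.γ)) := by
    simpa [div_eq_inv_mul] using (hasSum_geometric_of_lt_one M.γ_nonneg M.γ_lt_one).mul_right C
  refine hasSum_le (fun i => ?_) hregret hgeom
  rw [← Finset.mul_sum, MDP.sum_expectAt]
  refine mul_le_mul_of_nonneg_left (M.expectAt_le π s (fun s₀ => ?_) i) (pow_nonneg M.γ_nonneg i)
  rw [Finset.sum_comm]
  simp only [← Finset.mul_sum]
  exact sum_mul_le_of_sum_eq_one (π.nonneg s₀) (π.sum_one s₀) (hC s₀)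

/-- **State-wise CFR regret bound**: if the state-local cumulative advantages are bounded
by `C` at every state and action, then for every state `s` and every stationary policy
`π`, the cumulative full regret from `s` is at most `C / (1 - γ)`. -/
theorem cfr_statewise_regret_bound
    (M : MDP S A) (T : ℕ) (πs : Fin T → Policy S A)
    (rbar : ℝ) (hrbar : 0 < rbar)
    (rs : Fin T → S → A → S → ℝ) (hr : ∀ t s a s', |rs t s a s'| ≤ rbar)
    (C : ℝ) (hC : ∀ (s : S) (a : A), ∑ t : Fin T, M.adv (πs t) (rs t) s a ≤ C)
    (s : S) (π : Policy S A) :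
    ∑ t : Fin T, (M.v π (rs t) s - M.v (πs t) (rs t) s) ≤ C / (1 - M.γ) :=
  cfr_statewise_regret_bound_general M T πs rs C hC s π
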